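/- (Law of total expectation step with 'message-equals-belief' determinism) If B = M almost surely on the event {M ∈ {0,1}}, (A,M) is independent of (Y^{a,m})_{a,m} given L, and consistency holds, then for a,m ∈ {0,1} with P(A=a, M=m, L=l) > 0 for all l in the support of L: E[Y^{a,m}] = Σ_l E[Y | M=m, B=m, A=a, L=l] · P(L=l). -/

import Mathlib

/-!
Conditioning on an atom `{L = l}` turns the conditional independence of `(A, M)` and the
potential outcomes given `L` into plain independence, so further conditioning on
`{A = a, M = m}` leaves the mean of `Y^{a,m}` unchanged. On that event consistency replaces
`Y^{a,m}` by `Y`, and belief determinism makes the extra condition `B = m` hold almost surely.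
Summing over `l` is the law of total expectation.
-/

open MeasureTheory ProbabilityTheory

namespace ProbabilityTheory

variable {Ω β : Type*} {mΩ : MeasurableSpace Ω} {μ : Measure Ω}

theorem setIntegral_eq_integral_cond_mul [IsFiniteMeasure μ] (f : Ω → ℝ) (s : Set Ω) :
    ∫ ω in s, f ω ∂μ = (∫ ω, f ω ∂μ[|s]) * μ.real s := by
  by_cases hs : μ s = 0
  · simp [Measure.restrict_eq_zero.mpr hs, measureReal_def, hs]
  · rw [cond, integral_smul_measure, smul_eq_mul, ENNReal.toReal_inv, ← measureReal_def,
      mul_comm, ← mul_assoc, mul_inv_cancel₀ ((measureReal_ne_zero_iff).mpr hs), one_mul]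

theorem cond_congr_ae {s t : Set Ω} (h : s =ᵐ[μ] t) : μ[|s] = μ[|t] := by
  rw [cond, cond, measure_congr h, Measure.restrict_congr_set h]

theorem integral_cond_congr {s : Set Ω} (hs : MeasurableSet s) {f g : Ω → ℝ}
    (h : Set.EqOn f g s) : ∫ ω, f ω ∂μ[|s] = ∫ ω, g ω ∂μ[|s] :=
  integral_congr_ae <| (ae_cond_mem hs).mono h

theorem IndepFun.integral_cond_preimage {γ : Type*} [MeasurableSpace γ] [IsFiniteMeasure μ]
    {f : Ω → γ} {Z : Ω → ℝ} (h : IndepFun f Z μ) (hf : Measurable f) (hZ : Measurable Z)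
    {s : Set γ} (hs : MeasurableSet s) (hμs : μ (f ⁻¹' s) ≠ 0) :
    ∫ ω, Z ω ∂μ[|f ⁻¹' s] = ∫ ω, Z ω ∂μ := by
  have hsplit : ∫ ω in f ⁻¹' s, Z ω ∂μ = μ.real (f ⁻¹' s) * ∫ ω, Z ω ∂μ :=
    Indep.setIntegral_eq_mul (f := id) hf.comap_le h hZ.aemeasurable ⟨s, hs, rfl⟩
      measurable_id.aestronglyMeasurable
  rw [cond, integral_smul_measure, hsplit, ENNReal.toReal_inv, ← measureReal_def, smul_eq_mul,
    ← mul_assoc, inv_mul_cancel₀ ((measureReal_ne_zero_iff).mpr hμs), one_mul]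

variable [MeasurableSpace β] [MeasurableSingletonClass β] {X : Ω → β}

theorem integral_eq_tsum_integral_cond_fiber [IsFiniteMeasure μ] [Countable β]
    (hX : Measurable X) {f : Ω → ℝ} (hf : Integrable f μ) :
    ∫ ω, f ω ∂μ = ∑' x, (∫ ω, f ω ∂μ[|X ⁻¹' {x}]) * μ.real (X ⁻¹' {x}) := by
  have hcover : (⋃ x, X ⁻¹' {x}) = Set.univ := by ext ω; simp
  rw [← setIntegral_univ, ← hcover, integral_iUnion (fun x ↦ hX (measurableSet_singleton x))
    (fun x y hxy ↦ (Set.disjoint_singleton.mpr hxy).preimage X) hf.integrableOn]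
  simp_rw [setIntegral_eq_integral_cond_mul]

theorem condExp_comap_apply_eq_integral_cond [IsFiniteMeasure μ] (hX : Measurable X)
    {f : Ω → ℝ} (hf : Integrable f μ) {ω : Ω} (hω : μ (X ⁻¹' {X ω}) ≠ 0) :
    (μ[f | MeasurableSpace.comap X ‹_›]) ω = ∫ ω', f ω' ∂μ[|X ⁻¹' {X ω}] := by
  have hE : MeasurableSet[MeasurableSpace.comap X ‹_›] (X ⁻¹' {X ω}) :=
    ⟨_, measurableSet_singleton _, rfl⟩
  have hconst : ∀ ω' ∈ X ⁻¹' {X ω}, (μ[f | MeasurableSpace.comap X ‹_›]) ω' =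
      (μ[f | MeasurableSpace.comap X ‹_›]) ω :=
    fun ω' hω' ↦ stronglyMeasurable_condExp.factorsThrough hω'
  have h := setIntegral_condExp hX.comap_le hf hE
  rw [setIntegral_congr_fun (hX.comap_le _ hE) hconst, setIntegral_const,
    setIntegral_eq_integral_cond_mul, smul_eq_mul, mul_comm] at h
  exact mul_right_cancel₀ ((measureReal_ne_zero_iff).mpr hω) h

theorem CondIndepFun.indepFun_cond_fiber [StandardBorelSpace Ω] [IsFiniteMeasure μ]
    {γ δ : Type*} [MeasurableSpace γ] [MeasurableSpace δ] {f : Ω → γ} {g : Ω → δ}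
    (hX : Measurable X) (hf : Measurable f) (hg : Measurable g)
    (h : CondIndepFun (MeasurableSpace.comap X ‹_›) hX.comap_le f g μ) {x : β}
    (hx : μ (X ⁻¹' {x}) ≠ 0) : IndepFun f g μ[|X ⁻¹' {x}] := by
  rw [indepFun_iff_measure_inter_preimage_eq_mul]
  intro s t hs ht
  obtain ⟨ω, hωx, hω⟩ := Measure.exists_mem_of_measure_ne_zero_of_ae hx <| ae_restrict_of_ae <|
    (condIndepFun_iff_condExp_inter_preimage_eq_mul hf hg).mp h s t hs ht
  have hfiber : X ⁻¹' {X ω} = X ⁻¹' {x} := by rw [Set.mem_preimage.mp hωx]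
  have hcond : ∀ u, MeasurableSet u →
      (μ⟦u | MeasurableSpace.comap X ‹_›⟧) ω = μ[|X ⁻¹' {x}].real u := by
    intro u hu
    rw [condExp_comap_apply_eq_integral_cond hX ((integrable_const 1).indicator hu)
      (hfiber ▸ hx), hfiber]
    exact integral_indicator_one hu
  beta_reduce at hω
  rw [hcond _ ((hf hs).inter (hg ht)), hcond _ (hf hs), hcond _ (hg ht), measureReal_def,
    measureReal_def, measureReal_def, ← ENNReal.toReal_mul] at hω
  exact (ENNReal.toReal_eq_toReal_iff' (by finiteness) (by finiteness)).mp hω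

theorem CondIndepFun.integral_cond_fiber_inter_preimage [StandardBorelSpace Ω]
    [IsFiniteMeasure μ] {γ δ : Type*} [MeasurableSpace γ] [MeasurableSpace δ]
    {f : Ω → γ} {g : Ω → δ} (hX : Measurable X) (hf : Measurable f) (hg : Measurable g)
    (h : CondIndepFun (MeasurableSpace.comap X ‹_›) hX.comap_le f g μ) {φ : δ → ℝ}
    (hφ : Measurable φ) {x : β} {s : Set γ} (hs : MeasurableSet s)
    (hxs : μ (X ⁻¹' {x} ∩ f ⁻¹' s) ≠ 0) :
    ∫ ω, φ (g ω) ∂μ[|X ⁻¹' {x} ∩ f ⁻¹' s] = ∫ ω, φ (g ω) ∂μ[|X ⁻¹' {x}] := by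
  have hE := hX (measurableSet_singleton x)
  have hx : μ (X ⁻¹' {x}) ≠ 0 := fun h0 ↦ hxs (measure_mono_null Set.inter_subset_left h0)
  rw [← cond_cond_eq_cond_inter hE (hf hs)]
  exact ((h.indepFun_cond_fiber hX hf hg hx).comp measurable_id hφ).integral_cond_preimage hf
    (hφ.comp hg) hs (cond_pos_of_inter_ne_zero hE hxs).ne'

end ProbabilityTheory

theorem lte_step_message_equals_belief_general
    {Ω : Type*} [mΩ : MeasurableSpace Ω] [StandardBorelSpace Ω]
    (μ : Measure Ω) [IsProbabilityMeasure μ]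
    (A M B : Ω → ℤ) (L : Ω → ℕ) (Y : Ω → ℝ) (Y' : ℤ → ℤ → Ω → ℝ)
    (hA : Measurable A) (hM : Measurable M) (hL : Measurable L)
    (hY' : ∀ a m, Measurable (Y' a m))
    (hY'bd : ∀ a m, ∃ C, ∀ ω, |Y' a m ω| ≤ C)
    -- belief determinism: `B = M` a.s. on the event `{M ∈ {0,1}}`
    (hdet : ∀ᵐ ω ∂μ, (M ω = 0 ∨ M ω = 1) → B ω = M ω)
    -- randomization: `(A,M)` ⟂ (all potential outcomes) | `L`
    (hrand : CondIndepFun (MeasurableSpace.comap L inferInstance) hL.comap_le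
      (fun ω => (A ω, M ω)) (fun ω => fun p : ℤ × ℤ => Y' p.1 p.2 ω) μ)
    -- consistency
    (hcons : ∀ (a m : ℤ) (ω : Ω), A ω = a → M ω = m → Y ω = Y' a m ω) :
    ∀ a m : ℤ, (a = 0 ∨ a = 1) → (m = 0 ∨ m = 1) →
      (∀ l : ℕ, μ {ω | L ω = l} ≠ 0 → μ {ω | A ω = a ∧ M ω = m ∧ L ω = l} ≠ 0) →
      (∫ ω, Y' a m ω ∂μ) =
        ∑' l : ℕ,
          (∫ ω, Y ω ∂(μ[|{ω | M ω = m ∧ B ω = m ∧ A ω = a ∧ L ω = l}]))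
            * (μ {ω | L ω = l}).toReal := by
  intro a m _ hm hpos
  obtain ⟨C, hC⟩ := hY'bd a m
  have hint : Integrable (Y' a m) μ := .of_bound (hY' a m).aestronglyMeasurable C
    (.of_forall fun ω ↦ (Real.norm_eq_abs _).trans_le (hC ω))
  have hAM : Measurable fun ω ↦ (A ω, M ω) := hA.prodMk hM
  have hfam : Measurable fun ω (p : ℤ × ℤ) ↦ Y' p.1 p.2 ω :=
    measurable_pi_lambda _ fun p ↦ hY' p.1 p.2
  set S := (fun ω ↦ (A ω, M ω)) ⁻¹' {(a, m)}
  have hS : MeasurableSet S := hAM (measurableSet_singleton _)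
  rw [integral_eq_tsum_integral_cond_fiber hL hint]
  refine tsum_congr fun l ↦ ?_
  set E := L ⁻¹' {l}
  have hEm : MeasurableSet E := hL (measurableSet_singleton l)
  rw [measureReal_def]
  change _ * (μ E).toReal = _ * (μ E).toReal
  by_cases hE : μ E = 0
  · simp [hE]
  have hES : μ (E ∩ S) ≠ 0 := by
    convert hpos l hE using 2
    ext ω
    simp only [Set.mem_inter_iff, Set.mem_preimage, Set.mem_singleton_iff, Prod.mk.injEq,
      Set.mem_ofPred_eq, E, S]
    tauto
  have hCD : ({ω | M ω = m ∧ B ω = m ∧ A ω = a ∧ L ω = l} : Set Ω) =ᵐ[μ] (E ∩ S : Set Ω) :=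
    Filter.eventuallyEq_set.mpr <| hdet.mono fun ω hω ↦ by
      simp only [Set.mem_inter_iff, Set.mem_preimage, Set.mem_singleton_iff, Prod.mk.injEq,
        Set.mem_ofPred_eq, E, S]
      grind
  rw [cond_congr_ae hCD]
  congr 1
  calc ∫ ω, Y' a m ω ∂μ[|E]
      = ∫ ω, Y' a m ω ∂μ[|E ∩ S] := (hrand.integral_cond_fiber_inter_preimage hL hAM hfam
          (measurable_pi_apply (a, m)) (measurableSet_singleton _) hES).symm
    _ = ∫ ω, Y ω ∂μ[|E ∩ S] := integral_cond_congr (hEm.inter hS) fun ω hω ↦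
          (hcons a m ω (congrArg Prod.fst hω.2) (congrArg Prod.snd hω.2)).symm

/-- Law-of-total-expectation step with message-equals-belief determinism: if `B = M`
a.s. on `{M ∈ {0,1}}`, `(A,M)` is conditionally independent of all potential outcomes
`(Y^{a,m})` given `L`, and consistency holds, then for `a, m ∈ {0,1}` with
`P(A=a, M=m, L=l) > 0` for all `l` in the support of `L`:
`E[Y^{a,m}] = Σ_l E[Y | M=m, B=m, A=a, L=l] · P(L=l)`. -/
theorem lte_step_message_equals_belief
    {Ω : Type*} [mΩ : MeasurableSpace Ω] [StandardBorelSpace Ω] [Nonempty Ω]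
    (μ : Measure Ω) [IsProbabilityMeasure μ]
    (A M B : Ω → ℤ) (L : Ω → ℕ) (Y : Ω → ℝ) (Y' : ℤ → ℤ → Ω → ℝ)
    (hA : Measurable A) (hM : Measurable M) (hB : Measurable B) (hL : Measurable L)
    (hY : Measurable Y) (hY' : ∀ a m, Measurable (Y' a m))
    (hYbd : ∃ C, ∀ ω, |Y ω| ≤ C) (hY'bd : ∀ a m, ∃ C, ∀ ω, |Y' a m ω| ≤ C)
    -- belief determinism: `B = M` a.s. on the event `{M ∈ {0,1}}`
    (hdet : ∀ᵐ ω ∂μ, (M ω = 0 ∨ M ω = 1) → B ω = M ω)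
    -- randomization: `(A,M)` ⟂ (all potential outcomes) | `L`
    (hrand : CondIndepFun (MeasurableSpace.comap L inferInstance) hL.comap_le
      (fun ω => (A ω, M ω)) (fun ω => fun p : ℤ × ℤ => Y' p.1 p.2 ω) μ)
    -- consistency
    (hcons : ∀ (a m : ℤ) (ω : Ω), A ω = a → M ω = m → Y ω = Y' a m ω) :
    ∀ a m : ℤ, (a = 0 ∨ a = 1) → (m = 0 ∨ m = 1) →
      (∀ l : ℕ, μ {ω | L ω = l} ≠ 0 → μ {ω | A ω = a ∧ M ω = m ∧ L ω = l} ≠ 0) →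
      (∫ ω, Y' a m ω ∂μ) =
        ∑' l : ℕ,
          (∫ ω, Y ω ∂(μ[|{ω | M ω = m ∧ B ω = m ∧ A ω = a ∧ L ω = l}]))
            * (μ {ω | L ω = l}).toReal :=
  lte_step_message_equals_belief_general (mΩ := mΩ) μ A M B L Y Y' hA hM hL hY' hY'bd hdet hrand
    hcons
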